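/- arXiv:math/0501488 — 3 statements merged into one kernel-verified Lean document; each statement's English description precedes it below -/
import Mathlib

section
/- Let H : ℝ³ → ℝ (ℝ³ the Euclidean space EuclideanSpace ℝ (Fin 3) with inner product ⟨·,·⟩) be positively homogeneous of degree 1 (H(t·x) = t·H(x) for all t ≥ 0 and x ∈ ℝ³) and twice continuously differentiable on ℝ³ ∖ {0}. Then H is convex on ℝ³ if and only if for every pair of orthonormal vectors a, b ∈ ℝ³ the function f(t) = H(cos t · a + sin t · b) satisfies f(t) + f''(t) ≥ 0 for all t ∈ ℝ. -/
/-!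
For `H` positively homogeneous and differentiable off the origin, Euler's identity
`fderiv ℝ H a a = H a` makes the tangent plane at `a` the linear map `fderiv ℝ H a`, so `H` is
convex iff it lies above all these linear maps. On a great circle `f s = H (cos s • a + sin s • b)`
the tangent map at the point of angle `t` restricts to the sinusoid
`f t * cos (s - t) + f' t * sin (s - t)`, the solution of `y + y'' = 0` tangent to `f` at `t`.
If `f` lies above its tangent sinusoids, `f` minus the sinusoid has a minimum at `t`, whence
`f + f'' ≥ 0`. Conversely, if `f + f'' ≥ 0`, then `s ↦ f' s * sin (θ - s) + f s * cos (θ - s)` has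
derivative `(f + f'') s * sin (θ - s) ≥ 0` for `s ∈ [φ, θ] ⊆ [φ, φ + π]`, so `f` lies above its
tangent sinusoid over half a turn; this suffices, since every vector lies on a half great circle
issuing from any given unit vector.
-/

open Real Set Filter Module
open scoped RealInnerProductSpace Topology

section OneVariable

variable {f : ℝ → ℝ}

theorem IsLocalMin.deriv_deriv_nonneg {x₀ : ℝ} (hmin : IsLocalMin f x₀) (hc : ContinuousAt f x₀) :
    0 ≤ deriv (deriv f) x₀ := by
  by_contra! hneg
  have hmax : IsLocalMax f x₀ := isLocalMax_of_deriv_deriv_neg hneg hmin.deriv_eq_zero hc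
  have hconst : f =ᶠ[𝓝 x₀] fun _ => f x₀ := by
    filter_upwards [hmin, hmax] with x h₁ h₂ using le_antisymm h₂ h₁
  have : deriv f =ᶠ[𝓝 x₀] fun _ => 0 := by simpa using hconst.deriv
  simp [this.deriv_eq] at hneg

theorem hasDerivAt_sinusoid (A B t s : ℝ) :
    HasDerivAt (fun s => A * cos (s - t) + B * sin (s - t))
      (B * cos (s - t) + -A * sin (s - t)) s := by
  have hs := (hasDerivAt_id' s).sub_const t
  exact ((hs.cos.const_mul A).add (hs.sin.const_mul B)).congr_deriv (by ring)

theorem add_deriv_deriv_nonneg_of_sinusoid_le {t : ℝ} (hf : Differentiable ℝ f)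
    (hf' : DifferentiableAt ℝ (deriv f) t)
    (h : ∀ s, f t * cos (s - t) + deriv f t * sin (s - t) ≤ f s) :
    0 ≤ f t + deriv (deriv f) t := by
  set g : ℝ → ℝ := fun s => f s - (f t * cos (s - t) + deriv f t * sin (s - t))
  have hmin : IsLocalMin g t := Eventually.of_forall fun s => by simpa [g] using h s
  have hg' : deriv g = fun s => deriv f s - (deriv f t * cos (s - t) + -f t * sin (s - t)) :=
    funext fun s => ((hf s).hasDerivAt.sub (hasDerivAt_sinusoid _ _ t s)).deriv
  have hg'' : HasDerivAt (deriv g) (deriv (deriv f) t + f t) t := by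
    rw [hg']
    exact (hf'.hasDerivAt.sub (hasDerivAt_sinusoid _ _ t t)).congr_deriv (by simp)
  have := hmin.deriv_deriv_nonneg (hf.continuous.sub (by fun_prop)).continuousAt
  rw [hg''.deriv] at this
  linarith

theorem sinusoid_le_of_add_deriv_deriv_nonneg (hf : Differentiable ℝ f)
    (hf' : Differentiable ℝ (deriv f)) (h : ∀ s, 0 ≤ f s + deriv (deriv f) s) {φ θ : ℝ}
    (hφθ : φ ≤ θ) (hθφ : θ ≤ φ + π) :
    f φ * cos (θ - φ) + deriv f φ * sin (θ - φ) ≤ f θ := by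
  set K : ℝ → ℝ := fun s => deriv f s * sin (θ - s) + f s * cos (θ - s)
  have hK : ∀ s, HasDerivAt K ((f s + deriv (deriv f) s) * sin (θ - s)) s := by
    intro s
    have hs := (hasDerivAt_id' s).const_sub θ
    exact (((hf' s).hasDerivAt.mul hs.sin).add ((hf s).hasDerivAt.mul hs.cos)).congr_deriv
      (by ring)
  have hmono : MonotoneOn K (Icc φ θ) := by
    refine monotoneOn_of_deriv_nonneg (convex_Icc φ θ)
      (HasDerivAt.continuousOn fun s _ => hK s)
      (fun s _ => (hK s).differentiableAt.differentiableWithinAt) fun s hs => ?_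
    rw [interior_Icc] at hs
    rw [(hK s).deriv]
    exact mul_nonneg (h s)
      (sin_nonneg_of_nonneg_of_le_pi (by linarith [hs.2]) (by linarith [hs.1]))
  have := hmono (left_mem_Icc.2 hφθ) (right_mem_Icc.2 hφθ) hφθ
  simpa [K, add_comm, mul_comm] using this

end OneVariable

section NormedSpace

variable {E : Type*} [NormedAddCommGroup E] [NormedSpace ℝ E] {H : E → ℝ}

theorem HasFDerivAt.apply_self_of_homogeneous
    (hhom : ∀ t : ℝ, 0 ≤ t → ∀ x : E, H (t • x) = t * H x) {L : E →L[ℝ] ℝ} {x : E}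
    (hL : HasFDerivAt H L x) : L x = H x := by
  have hray : HasDerivAt (fun r : ℝ => H (r • x)) (L x) 1 := by
    have hL' : HasFDerivAt H L ((1 : ℝ) • x) := by rwa [one_smul]
    exact (hL'.comp_hasDerivAt (1 : ℝ) ((hasDerivAt_id' (1 : ℝ)).smul_const x)).congr_deriv
      (by simp)
  have hlin : (fun r : ℝ => H (r • x)) =ᶠ[𝓝 1] fun r => r * H x := by
    filter_upwards [Ioi_mem_nhds one_pos] with r hr using hhom r (le_of_lt hr) x
  exact (hlin.hasDerivAt_iff.mp hray).unique
    (((hasDerivAt_id (1 : ℝ)).mul_const (H x)).congr_deriv (one_mul _))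

theorem ConvexOn.add_le_of_hasFDerivAt (hH : ConvexOn ℝ univ H) {L : E →L[ℝ] ℝ} {x : E}
    (hL : HasFDerivAt H L x) (z : E) : H x + L (z - x) ≤ H z := by
  set ℓ : ℝ →ᵃ[ℝ] E := AffineMap.lineMap x z
  have hline : ConvexOn ℝ univ (H ∘ ℓ) := by simpa using hH.comp_affineMap ℓ
  have hd : HasDerivAt (H ∘ ℓ) (L (z - x)) 0 := by
    have hL' : HasFDerivAt H L (ℓ 0) := by simpa [ℓ] using hL
    exact hL'.comp_hasDerivAt 0 AffineMap.hasDerivAt_lineMap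
  have := hline.le_slope_of_hasDerivAt (mem_univ 0) (mem_univ 1) one_pos hd
  simp only [slope_def_field, Function.comp_apply, ℓ, AffineMap.lineMap_apply_zero,
    AffineMap.lineMap_apply_one, sub_zero, div_one, map_sub] at this
  rw [map_sub]
  linarith

theorem convexOn_univ_of_forall_exists_le
    (h : ∀ x : E, ∃ L : E →L[ℝ] ℝ, L x = H x ∧ ∀ z, L z ≤ H z) : ConvexOn ℝ univ H := by
  refine ⟨convex_univ, fun x _ y _ p q hp hq _ => ?_⟩
  obtain ⟨L, hLeq, hLle⟩ := h (p • x + q • y)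
  calc H (p • x + q • y) = p * L x + q * L y := by simp [← hLeq]
    _ ≤ p * H x + q * H y := by gcongr <;> exact hLle _

theorem fderiv_le_of_convexOn (hhom : ∀ t : ℝ, 0 ≤ t → ∀ x : E, H (t • x) = t * H x)
    (hH : ConvexOn ℝ univ H) {x : E} (hx : DifferentiableAt ℝ H x) (z : E) :
    fderiv ℝ H x z ≤ H z := by
  have := hH.add_le_of_hasFDerivAt hx.hasFDerivAt z
  rwa [map_sub, hx.hasFDerivAt.apply_self_of_homogeneous hhom, add_sub_cancel] at this

theorem convexOn_univ_of_fderiv_le [Nontrivial E]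
    (hhom : ∀ t : ℝ, 0 ≤ t → ∀ x : E, H (t • x) = t * H x)
    (hd : ∀ a : E, ‖a‖ = 1 → DifferentiableAt ℝ H a)
    (h : ∀ a : E, ‖a‖ = 1 → ∀ z, fderiv ℝ H a z ≤ H z) : ConvexOn ℝ univ H := by
  refine convexOn_univ_of_forall_exists_le fun x => ?_
  rcases eq_or_ne x 0 with rfl | hx
  · obtain ⟨a, ha⟩ := exists_norm_eq E zero_le_one
    exact ⟨fderiv ℝ H a, by simpa using (hhom 0 le_rfl 0).symm, h a ha⟩
  · set a := ‖x‖⁻¹ • x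
    have ha : ‖a‖ = 1 := norm_smul_inv_norm hx
    refine ⟨fderiv ℝ H a, ?_, h a ha⟩
    have hxa : x = ‖x‖ • a := by simp [a, smul_smul, hx]
    rw [hxa, map_smul, (hd a ha).hasFDerivAt.apply_self_of_homogeneous hhom, hhom _ (norm_nonneg _),
      smul_eq_mul]

theorem cos_smul_add_sin_smul_eq_rotate (a b : E) (s t : ℝ) :
    cos s • a + sin s • b =
      cos (s - t) • (cos t • a + sin t • b) + sin (s - t) • (-sin t • a + cos t • b) := by
  conv_lhs => rw [← sub_add_cancel s t, cos_add, sin_add]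
  module

theorem hasDerivAt_cos_smul_add_sin_smul (a b : E) (t : ℝ) :
    HasDerivAt (fun s => cos s • a + sin s • b) (-sin t • a + cos t • b) t :=
  ((hasDerivAt_cos t).smul_const a).add ((hasDerivAt_sin t).smul_const b)

theorem sinusoid_le_of_fderiv_le (hhom : ∀ t : ℝ, 0 ≤ t → ∀ x : E, H (t • x) = t * H x)
    {a b : E} {t : ℝ} (hd : DifferentiableAt ℝ H (cos t • a + sin t • b))
    (hle : ∀ z, fderiv ℝ H (cos t • a + sin t • b) z ≤ H z) (s : ℝ) :
    H (cos t • a + sin t • b) * cos (s - t) +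
        deriv (fun s => H (cos s • a + sin s • b)) t * sin (s - t) ≤
      H (cos s • a + sin s • b) := by
  have hderiv : deriv (fun s => H (cos s • a + sin s • b)) t =
      fderiv ℝ H (cos t • a + sin t • b) (-sin t • a + cos t • b) :=
    (hd.hasFDerivAt.comp_hasDerivAt t (hasDerivAt_cos_smul_add_sin_smul a b t)).deriv
  have := hle (cos s • a + sin s • b)
  rwa [cos_smul_add_sin_smul_eq_rotate a b s t, map_add, map_smul, map_smul,
    hd.hasFDerivAt.apply_self_of_homogeneous hhom, ← hderiv, smul_eq_mul, smul_eq_mul,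
    ← cos_smul_add_sin_smul_eq_rotate, mul_comm, mul_comm (sin _)] at this

end NormedSpace

section InnerProductSpace

variable {E : Type*} [NormedAddCommGroup E] [InnerProductSpace ℝ E] {H : E → ℝ}

theorem norm_cos_smul_add_sin_smul {a b : E} (ha : ‖a‖ = 1) (hb : ‖b‖ = 1) (hab : ⟪a, b⟫ = 0)
    (t : ℝ) : ‖cos t • a + sin t • b‖ = 1 := by
  have : ‖cos t • a + sin t • b‖ ^ 2 = 1 := by
    rw [norm_add_sq_real, norm_smul, norm_smul, real_inner_smul_left, real_inner_smul_right, hab,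
      ha, hb, norm_eq_abs, norm_eq_abs]
    nlinarith [sq_abs (cos t), sq_abs (sin t), cos_sq_add_sin_sq t]
  exact (pow_eq_one_iff_of_nonneg (norm_nonneg _) two_ne_zero).1 this

theorem contDiff_comp_cos_smul_add_sin_smul (hH : ContDiffOn ℝ 2 H {0}ᶜ) {a b : E}
    (ha : ‖a‖ = 1) (hb : ‖b‖ = 1) (hab : ⟪a, b⟫ = 0) :
    ContDiff ℝ 2 (fun s => H (cos s • a + sin s • b)) :=
  hH.comp_contDiff (by fun_prop) fun s => by
    simp [← norm_ne_zero_iff, norm_cos_smul_add_sin_smul ha hb hab]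

theorem exists_norm_eq_one_inner_eq_zero [FiniteDimensional ℝ E] (hE : 2 ≤ finrank ℝ E) (a : E) :
    ∃ b : E, ‖b‖ = 1 ∧ ⟪a, b⟫ = 0 := by
  have hspan : (ℝ ∙ a) ≠ ⊤ := by
    intro htop
    have := finrank_span_le_card (R := ℝ) ({a} : Set E)
    rw [htop, finrank_top] at this
    simp at this
    omega
  obtain ⟨v, hv, hv0⟩ := Submodule.exists_mem_ne_zero_of_ne_bot
    (mt Submodule.orthogonal_eq_bot_iff.mp hspan)
  refine ⟨‖v‖⁻¹ • v, norm_smul_inv_norm hv0, ?_⟩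
  rw [real_inner_smul_right, Submodule.mem_orthogonal_singleton_iff_inner_right.1 hv, mul_zero]

theorem exists_polar_of_nonneg (p q : ℝ) (hq : 0 ≤ q) :
    ∃ r θ : ℝ, 0 ≤ r ∧ θ ∈ Icc 0 π ∧ p = r * cos θ ∧ q = r * sin θ :=
  ⟨‖(⟨p, q⟩ : ℂ)‖, Complex.arg ⟨p, q⟩, norm_nonneg _,
    ⟨Complex.arg_nonneg_iff.2 hq, Complex.arg_le_pi _⟩,
    (Complex.norm_mul_cos_arg ⟨p, q⟩).symm, (Complex.norm_mul_sin_arg ⟨p, q⟩).symm⟩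

theorem exists_eq_smul_cos_smul_add_sin_smul [FiniteDimensional ℝ E] (hE : 2 ≤ finrank ℝ E)
    {a : E} (ha : ‖a‖ = 1) (z : E) :
    ∃ b : E, ‖b‖ = 1 ∧ ⟪a, b⟫ = 0 ∧
      ∃ r θ : ℝ, 0 ≤ r ∧ θ ∈ Icc 0 π ∧ z = r • (cos θ • a + sin θ • b) := by
  have hframe : ∃ b : E, ‖b‖ = 1 ∧ ⟪a, b⟫ = 0 ∧ ∃ p q : ℝ, 0 ≤ q ∧ z = p • a + q • b := by
    set w := z - ⟪a, z⟫ • a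
    have haw : ⟪a, w⟫ = 0 := by
      simp [w, inner_sub_right, real_inner_smul_right, ha]
    rcases eq_or_ne w 0 with hw | hw
    · obtain ⟨b, hb, hab⟩ := exists_norm_eq_one_inner_eq_zero hE a
      exact ⟨b, hb, hab, ⟪a, z⟫, 0, le_rfl, by rw [zero_smul, add_zero, ← sub_eq_zero]; exact hw⟩
    · refine ⟨‖w‖⁻¹ • w, norm_smul_inv_norm hw, by simp [real_inner_smul_right, haw],
        ⟪a, z⟫, ‖w‖, norm_nonneg _, ?_⟩
      rw [smul_inv_smul₀ (norm_ne_zero_iff.2 hw), add_sub_cancel]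
  obtain ⟨b, hb, hab, p, q, hq, rfl⟩ := hframe
  obtain ⟨r, θ, hr, hθ, rfl, rfl⟩ := exists_polar_of_nonneg p q hq
  exact ⟨b, hb, hab, r, θ, hr, hθ, by module⟩

theorem fderiv_le_of_add_deriv_deriv_nonneg [FiniteDimensional ℝ E] (hE : 2 ≤ finrank ℝ E)
    (hhom : ∀ t : ℝ, 0 ≤ t → ∀ x : E, H (t • x) = t * H x) (hH : ContDiffOn ℝ 2 H {0}ᶜ)
    {a : E} (ha : ‖a‖ = 1)
    (hcirc : ∀ b : E, ‖b‖ = 1 → ⟪a, b⟫ = 0 → ∀ t : ℝ,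
      0 ≤ H (cos t • a + sin t • b) + deriv (deriv fun s => H (cos s • a + sin s • b)) t)
    (z : E) : fderiv ℝ H a z ≤ H z := by
  obtain ⟨b, hb, hab, r, θ, hr, hθ, rfl⟩ := exists_eq_smul_cos_smul_add_sin_smul hE ha z
  have hf := contDiff_comp_cos_smul_add_sin_smul hH ha hb hab
  have hda : DifferentiableAt ℝ H a :=
    (hH.contDiffAt (isOpen_compl_singleton.mem_nhds (ne_zero_of_norm_ne_zero (by simp [ha])))
      ).differentiableAt two_ne_zero
  have hderiv : deriv (fun s => H (cos s • a + sin s • b)) 0 = fderiv ℝ H a b := by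
    have hda' : DifferentiableAt ℝ H (cos 0 • a + sin 0 • b) := by simpa using hda
    simpa [Function.comp_def] using
      (hda'.hasFDerivAt.comp_hasDerivAt 0 (hasDerivAt_cos_smul_add_sin_smul a b 0)).deriv
  have key := sinusoid_le_of_add_deriv_deriv_nonneg (hf.differentiable two_ne_zero)
    hf.differentiable_deriv_two (hcirc b hb hab) hθ.1 (by linarith [hθ.2])
  simp only [sub_zero, cos_zero, sin_zero, one_smul, zero_smul, add_zero, hderiv] at key
  calc fderiv ℝ H a (r • (cos θ • a + sin θ • b))
      = r * (H a * cos θ + fderiv ℝ H a b * sin θ) := by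
        simp [hda.hasFDerivAt.apply_self_of_homogeneous hhom]; ring
    _ ≤ r * H (cos θ • a + sin θ • b) := by gcongr
    _ = H (r • (cos θ • a + sin θ • b)) := (hhom r hr _).symm

end InnerProductSpace

theorem convexity_iff_great_circle_inequality
    (H : EuclideanSpace ℝ (Fin 3) → ℝ)
    (hhom : ∀ t : ℝ, 0 ≤ t → ∀ x : EuclideanSpace ℝ (Fin 3), H (t • x) = t * H x)
    (hsmooth : ContDiffOn ℝ 2 H {(0 : EuclideanSpace ℝ (Fin 3))}ᶜ) :
    ConvexOn ℝ Set.univ H ↔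
      ∀ a b : EuclideanSpace ℝ (Fin 3), ‖a‖ = 1 → ‖b‖ = 1 → ⟪a, b⟫ = 0 →
        ∀ t : ℝ,
          0 ≤ (fun s : ℝ => H (Real.cos s • a + Real.sin s • b)) t +
            deriv (deriv (fun s : ℝ => H (Real.cos s • a + Real.sin s • b))) t := by
  have hdiff : ∀ a : EuclideanSpace ℝ (Fin 3), ‖a‖ = 1 → DifferentiableAt ℝ H a := fun a ha =>
    (hsmooth.contDiffAt (isOpen_compl_singleton.mem_nhds (ne_zero_of_norm_ne_zero (by simp [ha])))
      ).differentiableAt two_ne_zero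
  constructor
  · intro hconv a b ha hb hab t
    have hf := contDiff_comp_cos_smul_add_sin_smul hsmooth ha hb hab
    have hu := hdiff _ (norm_cos_smul_add_sin_smul ha hb hab t)
    exact add_deriv_deriv_nonneg_of_sinusoid_le (hf.differentiable two_ne_zero)
      hf.differentiable_deriv_two.differentiableAt
      (sinusoid_le_of_fderiv_le hhom hu (fderiv_le_of_convexOn hhom hconv hu))
  · intro hcirc
    exact convexOn_univ_of_fderiv_le hhom hdiff fun a ha =>
      fderiv_le_of_add_deriv_deriv_nonneg (by simp) hhom hsmooth ha (hcirc a · ha)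
end

section
/- Let F be a continuous nonnegative real-valued function defined on pairs (ω, v) of orthonormal unit vectors of ℝ³ (flags). Suppose H : ℝ³ → ℝ is positively homogeneous of degree 1, twice continuously differentiable on ℝ³ ∖ {0}, and for every unit vector ω and every pair of orthonormal vectors a, b orthogonal to ω, the function f(φ) = H(cos φ · a + sin φ · b) satisfies f(φ) + f''(φ) = F(ω, cos φ·a + sin φ·b) for all φ ∈ ℝ. Then: (i) H is convex and is the support function of the convex body B = {y ∈ ℝ³ : ⟨x, y⟩ ≤ H(x) for all x ∈ ℝ³}, i.e. H(x) = sup_{y ∈ B} ⟨x, y⟩ for all x; and (ii) if H' is any other function with the same properties (positively homogeneous of degree 1, C² away from 0, same great-circle equation with the same F), then there exists a₀ ∈ ℝ³ with H'(x) = H(x) + ⟨a₀, x⟩ for all x ∈ ℝ³. -/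
/-!
Restricted to a great circle, `H` is a function `g` with `g + g'' = F ≥ 0`. The Wronskians of `g`
with the solutions `sin φ` and `sin (θ - φ)` of `y + y'' = 0` are then monotone on `[0, θ]`, which
gives `g σ sin θ ≤ g 0 sin (θ - σ) + g θ sin σ` for `0 ≤ σ ≤ θ ≤ π`. By homogeneity this is
`H (x + y) ≤ H x + H y` for `x`, `y` in the plane of the circle, so `H` is sublinear, hence convex,
and at `x ≠ 0` its gradient is a point of `B` at which `⟪x, ·⟫` attains `H x`.

The difference `D` of two solutions satisfies `d + d'' = 0` on every great circle, so there
`d φ = d 0 cos φ + d (π / 2) sin φ`. With homogeneity, `D` is linear on every plane, hence linear.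
-/

open Real Set Module
open scoped RealInnerProductSpace

section OneDim

variable {f : ℝ → ℝ}

theorem eq_cos_sin_of_add_deriv_deriv_eq_zero (hf : Differentiable ℝ f)
    (hf' : Differentiable ℝ (deriv f)) (h : ∀ x, f x + deriv (deriv f) x = 0) (x : ℝ) :
    f x = f 0 * cos x + deriv f 0 * sin x := by
  have hP : ∀ x, HasDerivAt (fun x => f x * cos x - deriv f x * sin x) 0 x := fun x =>
    (((hf x).hasDerivAt.mul (hasDerivAt_cos x)).sub
      ((hf' x).hasDerivAt.mul (hasDerivAt_sin x))).congr_deriv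
      (by linear_combination -sin x * h x)
  have hQ : ∀ x, HasDerivAt (fun x => f x * sin x + deriv f x * cos x) 0 x := fun x =>
    (((hf x).hasDerivAt.mul (hasDerivAt_sin x)).add
      ((hf' x).hasDerivAt.mul (hasDerivAt_cos x))).congr_deriv
      (by linear_combination cos x * h x)
  have hP0 := is_const_of_deriv_eq_zero (fun x => (hP x).differentiableAt)
    (fun x => (hP x).deriv) x 0
  have hQ0 := is_const_of_deriv_eq_zero (fun x => (hQ x).differentiableAt)
    (fun x => (hQ x).deriv) x 0
  simp only [cos_zero, sin_zero, mul_one, mul_zero, sub_zero, zero_add] at hP0 hQ0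
  linear_combination cos x * hP0 + sin x * hQ0 - f x * sin_sq_add_cos_sq x

/-- Sturm comparison with `sin`: a function with `f + f'' ≥ 0` lies below the solution of
`f + f'' = 0` with the same values at `0` and `θ`, as long as `θ ≤ π`. -/
theorem mul_sin_le_of_add_deriv_deriv_nonneg (hf : Differentiable ℝ f)
    (hf' : Differentiable ℝ (deriv f)) {σ θ : ℝ} (hσ : 0 ≤ σ) (hσθ : σ ≤ θ) (hθ : θ ≤ π)
    (h : ∀ φ ∈ Icc 0 θ, 0 ≤ f φ + deriv (deriv f) φ) :
    f σ * sin θ ≤ f 0 * sin (θ - σ) + f θ * sin σ := by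
  have hmono : ∀ W w : ℝ → ℝ, (∀ φ, HasDerivAt W (w φ) φ) →
      (∀ φ ∈ Icc 0 θ, 0 ≤ w φ) → MonotoneOn W (Icc 0 θ) := fun W w hW hw =>
    monotoneOn_of_deriv_nonneg (convex_Icc 0 θ)
      (fun φ _ => (hW φ).continuousAt.continuousWithinAt)
      (fun φ _ => (hW φ).differentiableAt.differentiableWithinAt)
      (fun φ hφ => (hW φ).deriv ▸ hw φ (interior_subset hφ))
  have hsub : ∀ φ, HasDerivAt (fun φ => θ - φ) (-1) φ := fun φ => by
    simpa using (hasDerivAt_id φ).const_sub θ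
  have h₁ : MonotoneOn (fun φ => deriv f φ * sin φ - f φ * cos φ) (Icc 0 θ) :=
    hmono _ (fun φ => (f φ + deriv (deriv f) φ) * sin φ)
      (fun φ => (((hf' φ).hasDerivAt.mul (hasDerivAt_sin φ)).sub
        ((hf φ).hasDerivAt.mul (hasDerivAt_cos φ))).congr_deriv (by ring))
      fun φ hφ => mul_nonneg (h φ hφ) (sin_nonneg_of_nonneg_of_le_pi hφ.1 (hφ.2.trans hθ))
  have h₂ : MonotoneOn (fun φ => deriv f φ * sin (θ - φ) + f φ * cos (θ - φ)) (Icc 0 θ) :=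
    hmono _ (fun φ => (f φ + deriv (deriv f) φ) * sin (θ - φ))
      (fun φ => (((hf' φ).hasDerivAt.mul (hsub φ).sin).add
        ((hf φ).hasDerivAt.mul (hsub φ).cos)).congr_deriv (by ring))
      fun φ hφ => mul_nonneg (h φ hφ)
        (sin_nonneg_of_nonneg_of_le_pi (by linarith [hφ.2]) (by linarith [hφ.1]))
  have hσ' : σ ∈ Icc 0 θ := ⟨hσ, hσθ⟩
  have h0 := h₁ (left_mem_Icc.2 (hσ.trans hσθ)) hσ' hσ
  have hθ' := h₂ hσ' (right_mem_Icc.2 (hσ.trans hσθ)) hσθ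
  simp only [sin_zero, cos_zero, sub_self, mul_zero, mul_one, zero_sub, zero_add] at h0 hθ'
  have hs₁ : 0 ≤ sin (θ - σ) := sin_nonneg_of_nonneg_of_le_pi (by linarith) (by linarith)
  have hs₂ : 0 ≤ sin σ := sin_nonneg_of_nonneg_of_le_pi hσ (hσθ.trans hθ)
  have hsin : sin θ = sin (θ - σ) * cos σ + cos (θ - σ) * sin σ := by
    rw [← sin_add, sub_add_cancel]
  linear_combination mul_le_mul_of_nonneg_left h0 hs₁ + mul_le_mul_of_nonneg_left hθ' hs₂
    + f σ * hsin

end OneDim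

theorem exists_polar (p q : ℝ) : ∃ r θ : ℝ, 0 ≤ r ∧ r * cos θ = p ∧ r * sin θ = q :=
  ⟨‖(⟨p, q⟩ : ℂ)‖, Complex.arg ⟨p, q⟩, norm_nonneg _, Complex.norm_mul_cos_arg _,
    Complex.norm_mul_sin_arg _⟩

theorem exists_polar_of_pos {p q : ℝ} (hq : 0 < q) :
    ∃ r θ : ℝ, 0 < r ∧ 0 < θ ∧ θ < π ∧ r * cos θ = p ∧ r * sin θ = q := by
  set z : ℂ := ⟨p, q⟩
  have hsin : ‖z‖ * sin z.arg = q := Complex.norm_mul_sin_arg z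
  refine ⟨‖z‖, z.arg, norm_pos_iff.2 fun h => ?_, ?_, Complex.arg_lt_pi_iff.2 (Or.inr hq.ne'),
    Complex.norm_mul_cos_arg z, hsin⟩
  · rw [h, norm_zero, zero_mul] at hsin
    exact hq.ne hsin
  · refine (Complex.arg_nonneg_iff.2 hq.le).lt_of_ne fun h => ?_
    rw [← h, sin_zero, mul_zero] at hsin
    exact hq.ne hsin

section Module

variable {V : Type*} [AddCommGroup V] [Module ℝ V]

theorem convexOn_univ_of_subadditive {H : V → ℝ}
    (hhom : ∀ t : ℝ, 0 ≤ t → ∀ x, H (t • x) = t * H x) (hsub : ∀ x y, H (x + y) ≤ H x + H y) :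
    ConvexOn ℝ univ H :=
  ⟨convex_univ, fun x _ y _ s t hs ht _ => (hsub _ _).trans_eq <| by
    rw [hhom s hs, hhom t ht, smul_eq_mul, smul_eq_mul]⟩

theorem map_add_le_of_mem_span {H : V → ℝ} (hhom : ∀ t : ℝ, 0 ≤ t → ∀ x, H (t • x) = t * H x)
    (hanti : ∀ x, 0 ≤ H x + H (-x)) {x y : V} (hy : y ∈ ℝ ∙ x) : H (x + y) ≤ H x + H y := by
  obtain ⟨c, rfl⟩ := Submodule.mem_span_singleton.1 hy
  have hneg : ∀ t : ℝ, t ≤ 0 → H (t • x) = -t * H (-x) := fun t ht => by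
    rw [← neg_smul_neg, hhom _ (neg_nonneg.2 ht)]
  rw [show x + c • x = (1 + c) • x by rw [add_smul, one_smul]]
  rcases le_total 0 c with hc | hc
  · rw [hhom _ (by linarith), hhom _ hc]
    linarith
  rcases le_total 0 (1 + c) with hc' | hc'
  · rw [hhom _ hc', hneg _ hc]
    nlinarith [mul_nonneg (neg_nonneg.2 hc) (hanti x)]
  · rw [hneg _ hc', hneg _ hc]
    linarith [hanti x]

end Module

section NormedSpace

variable {E : Type*} [NormedAddCommGroup E] [NormedSpace ℝ E] {H : E → ℝ}

theorem HasFDerivAt.apply_self_eq_of_homogeneous {L : E →L[ℝ] ℝ} {x : E}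
    (hhom : ∀ t : ℝ, 0 ≤ t → ∀ x, H (t • x) = t * H x) (hL : HasFDerivAt H L x) :
    L x = H x := by
  have hL' : HasFDerivAt H L ((1 : ℝ) • x) := by rwa [one_smul]
  have h₁ : HasDerivAt (fun t : ℝ => H (t • x)) (L x) 1 := by
    simpa [Function.comp_def] using
      hL'.comp_hasDerivAt (1 : ℝ) ((hasDerivAt_id (1 : ℝ)).smul_const x)
  have h₂ : HasDerivAt (fun t : ℝ => H (t • x)) (H x) 1 := by
    refine (((hasDerivAt_id (1 : ℝ)).mul_const (H x)).congr_of_eventuallyEq ?_).congr_deriv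
      (one_mul _)
    filter_upwards [lt_mem_nhds one_pos] with t ht using hhom t ht.le x
  exact h₁.unique h₂

theorem ConvexOn.hasFDerivAt_le_sub {L : E →L[ℝ] ℝ} {x : E} (hconv : ConvexOn ℝ univ H)
    (hL : HasFDerivAt H L x) (y : E) : L (y - x) ≤ H y - H x := by
  let ℓ : ℝ →ᵃ[ℝ] E := AffineMap.lineMap x y
  have hℓ : HasDerivAt (H ∘ ℓ) (L (y - x)) 0 :=
    HasFDerivAt.comp_hasDerivAt (0 : ℝ) (by simpa [ℓ] using hL) AffineMap.hasDerivAt_lineMap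
  simpa [slope_def_field, ℓ] using
    (hconv.comp_affineMap ℓ).le_slope_of_hasDerivAt (mem_univ 0) (mem_univ 1) one_pos hℓ

end NormedSpace

section InnerProductSpace

variable {E : Type*} [NormedAddCommGroup E] [InnerProductSpace ℝ E]

theorem exists_norm_eq_one_forall_inner_eq_zero {ι : Type*} [Fintype ι] (v : ι → E)
    (h : Fintype.card ι < finrank ℝ E) : ∃ w : E, ‖w‖ = 1 ∧ ∀ i, ⟪v i, w⟫ = 0 := by
  have : FiniteDimensional ℝ E := Module.finite_of_finrank_pos (by omega)
  set K := Submodule.span ℝ (range v)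
  have hK : K ≠ ⊤ :=
    (Submodule.lt_top_of_finrank_lt_finrank ((finrank_range_le_card v).trans_lt h)).ne
  obtain ⟨w, hwK, hw⟩ :=
    Submodule.exists_mem_ne_zero_of_ne_bot (mt K.orthogonal_eq_bot_iff.1 hK)
  refine ⟨‖w‖⁻¹ • w, norm_smul_inv_norm hw, fun i => ?_⟩
  rw [real_inner_smul_right, K.inner_right_of_mem_orthogonal
    (Submodule.subset_span (mem_range_self i)) hwK, mul_zero]

theorem exists_orthonormal_of_notMem_span {x y : E} (hx : x ≠ 0) (hy : y ∉ ℝ ∙ x) :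
    ∃ a b : E, ‖a‖ = 1 ∧ ‖b‖ = 1 ∧ ⟪a, b⟫ = 0 ∧
      ∃ r p q : ℝ, 0 < r ∧ 0 < q ∧ x = r • a ∧ y = p • a + q • b := by
  set a := ‖x‖⁻¹ • x
  have ha : ‖a‖ = 1 := norm_smul_inv_norm hx
  set z := y - ⟪a, y⟫ • a
  have hz : z ≠ 0 := fun h => hy <| Submodule.mem_span_singleton.2
    ⟨⟪a, y⟫ * ‖x‖⁻¹, by rw [mul_smul, ← sub_eq_zero.1 h]⟩
  refine ⟨a, ‖z‖⁻¹ • z, ha, norm_smul_inv_norm hz, ?_, ‖x‖, ⟪a, y⟫, ‖z‖, norm_pos_iff.2 hx,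
    norm_pos_iff.2 hz, (smul_inv_smul₀ (norm_ne_zero_iff.2 hx) x).symm, ?_⟩
  · rw [real_inner_smul_right, inner_sub_right, real_inner_smul_right,
      real_inner_self_eq_norm_sq, ha]
    ring
  · rw [smul_inv_smul₀ (norm_ne_zero_iff.2 hz), add_sub_cancel]

noncomputable def greatCircle (a b : E) (s : ℝ) : E := cos s • a + sin s • b

variable {a b : E}

theorem smul_greatCircle (t s : ℝ) :
    t • greatCircle a b s = (t * cos s) • a + (t * sin s) • b := by
  simp only [greatCircle, smul_add, smul_smul]

theorem norm_greatCircle (ha : ‖a‖ = 1) (hb : ‖b‖ = 1) (hab : ⟪a, b⟫ = 0) (s : ℝ) :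
    ‖greatCircle a b s‖ = 1 := by
  have h := norm_add_sq_eq_norm_sq_add_norm_sq_real
    (by rw [real_inner_smul_left, real_inner_smul_right, hab, mul_zero, mul_zero] :
      ⟪cos s • a, sin s • b⟫ = 0)
  rw [norm_smul, norm_smul, ha, hb, norm_eq_abs, norm_eq_abs, mul_one, mul_one,
    abs_mul_abs_self, abs_mul_abs_self, ← sq, ← sq, ← sq, cos_sq_add_sin_sq] at h
  exact (sq_eq_one_iff.1 h).resolve_right (by linarith [norm_nonneg (cos s • a + sin s • b)])

theorem inner_greatCircle_eq_zero {ω : E} (ha : ⟪ω, a⟫ = 0) (hb : ⟪ω, b⟫ = 0) (s : ℝ) :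
    ⟪ω, greatCircle a b s⟫ = 0 := by
  simp [greatCircle, inner_add_right, real_inner_smul_right, ha, hb]

theorem ContDiffOn.comp_greatCircle {n : WithTop ℕ∞} {H : E → ℝ} (hH : ContDiffOn ℝ n H {0}ᶜ)
    (ha : ‖a‖ = 1) (hb : ‖b‖ = 1) (hab : ⟪a, b⟫ = 0) : ContDiff ℝ n (H ∘ greatCircle a b) :=
  hH.comp_contDiff ((contDiff_cos.smul contDiff_const).add (contDiff_sin.smul contDiff_const))
    fun s => norm_ne_zero_iff.1 (by rw [norm_greatCircle ha hb hab]; exact one_ne_zero)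

theorem add_map_neg_nonneg_of_add_deriv_deriv_nonneg {H : E → ℝ}
    (hg : Differentiable ℝ (H ∘ greatCircle a b))
    (hg' : Differentiable ℝ (deriv (H ∘ greatCircle a b)))
    (hpos : ∀ φ, 0 ≤ H (greatCircle a b φ) + deriv (deriv (H ∘ greatCircle a b)) φ) :
    0 ≤ H a + H (-a) := by
  have h := mul_sin_le_of_add_deriv_deriv_nonneg hg hg' (σ := π / 2) (θ := π) (by positivity)
    (by linarith [pi_pos]) le_rfl fun φ _ => hpos φ
  simpa [greatCircle, sub_half] using h

theorem map_add_le_of_add_deriv_deriv_nonneg {H : E → ℝ}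
    (hhom : ∀ t : ℝ, 0 ≤ t → ∀ x, H (t • x) = t * H x)
    (hg : Differentiable ℝ (H ∘ greatCircle a b))
    (hg' : Differentiable ℝ (deriv (H ∘ greatCircle a b)))
    (hpos : ∀ φ, 0 ≤ H (greatCircle a b φ) + deriv (deriv (H ∘ greatCircle a b)) φ)
    {r p q : ℝ} (hr : 0 < r) (hq : 0 < q) :
    H (r • a + (p • a + q • b)) ≤ H (r • a) + H (p • a + q • b) := by
  -- `r • a`, `p • a + q • b` and their sum lie on the rays of angles `0`, `θ` and `σ`.
  obtain ⟨r', θ, hr', hθ, hθπ, hp, hq'⟩ := exists_polar_of_pos hq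
  obtain ⟨ρ, σ, hρ, hσ, hσπ, hp', hq''⟩ := exists_polar_of_pos (p := r + p) hq
  have hx : r • a = r • greatCircle a b 0 := by simp [greatCircle]
  have hy : p • a + q • b = r' • greatCircle a b θ := by rw [smul_greatCircle, hp, hq']
  have hxy : r • a + (p • a + q • b) = ρ • greatCircle a b σ := by
    rw [smul_greatCircle, hp', hq'', add_smul, add_assoc]
  have hsinθ : 0 < sin θ := sin_pos_of_pos_of_lt_pi hθ hθπ
  have hsinθσ : ρ * sin (θ - σ) = r * sin θ := by
    rw [sin_sub]
    linear_combination sin θ * hp' - cos θ * hq'' - sin θ * hp + cos θ * hq'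
  have hσθ : σ ≤ θ := by
    by_contra! h
    have : sin (θ - σ) ≤ 0 := sin_nonpos_of_nonpos_of_neg_pi_le (by linarith) (by linarith)
    nlinarith [mul_pos hr hsinθ]
  have key := mul_le_mul_of_nonneg_left
    (mul_sin_le_of_add_deriv_deriv_nonneg hg hg' hσ.le hσθ hθπ.le fun φ _ => hpos φ) hρ.le
  simp only [Function.comp_apply] at key
  rw [hxy, hx, hy, hhom _ hρ.le, hhom _ hr.le, hhom _ hr'.le]
  refine le_of_mul_le_mul_right ?_ hsinθ
  linear_combination key + H (greatCircle a b 0) * hsinθσ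
    + H (greatCircle a b θ) * (hq''.trans hq'.symm)

theorem convexOn_univ_of_add_deriv_deriv_nonneg (hE : 1 < finrank ℝ E) {H : E → ℝ}
    (hhom : ∀ t : ℝ, 0 ≤ t → ∀ x, H (t • x) = t * H x) (hsmooth : ContDiffOn ℝ 2 H {0}ᶜ)
    (hpos : ∀ a b : E, ‖a‖ = 1 → ‖b‖ = 1 → ⟪a, b⟫ = 0 →
      ∀ φ, 0 ≤ H (greatCircle a b φ) + deriv (deriv (H ∘ greatCircle a b)) φ) :
    ConvexOn ℝ univ H := by
  have hH0 : H 0 = 0 := by simpa using hhom 0 le_rfl 0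
  have hg : ∀ a b : E, ‖a‖ = 1 → ‖b‖ = 1 → ⟪a, b⟫ = 0 → ContDiff ℝ 2 (H ∘ greatCircle a b) :=
    fun a b ha hb hab => hsmooth.comp_greatCircle ha hb hab
  have hanti : ∀ x, 0 ≤ H x + H (-x) := by
    intro x
    rcases eq_or_ne x 0 with rfl | hx
    · simp [hH0]
    have ha : ‖‖x‖⁻¹ • x‖ = 1 := norm_smul_inv_norm hx
    obtain ⟨b, hb, hab⟩ := exists_norm_eq_one_forall_inner_eq_zero ![‖x‖⁻¹ • x] (by simpa)
    have h := add_map_neg_nonneg_of_add_deriv_deriv_nonneg ((hg _ b ha hb (hab 0)).differentiable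
      two_ne_zero) (hg _ b ha hb (hab 0)).differentiable_deriv_two (hpos _ b ha hb (hab 0))
    rw [← smul_neg, hhom _ (by positivity), hhom _ (by positivity), ← mul_add] at h
    exact nonneg_of_mul_nonneg_right h (by positivity)
  refine convexOn_univ_of_subadditive hhom fun x y => ?_
  rcases eq_or_ne x 0 with rfl | hx
  · simp [hH0]
  by_cases hy : y ∈ ℝ ∙ x
  · exact map_add_le_of_mem_span hhom hanti hy
  obtain ⟨a, b, ha, hb, hab, r, p, q, hr, hq, rfl, rfl⟩ := exists_orthonormal_of_notMem_span hx hy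
  exact map_add_le_of_add_deriv_deriv_nonneg hhom ((hg a b ha hb hab).differentiable two_ne_zero)
    (hg a b ha hb hab).differentiable_deriv_two (hpos a b ha hb hab) hr hq

theorem exists_forall_inner_le_and_inner_eq [CompleteSpace E] [Nontrivial E] {H : E → ℝ}
    (hconv : ConvexOn ℝ univ H) (hhom : ∀ t : ℝ, 0 ≤ t → ∀ x, H (t • x) = t * H x)
    (hdiff : DifferentiableOn ℝ H {0}ᶜ) (x : E) :
    ∃ y : E, (∀ z, ⟪z, y⟫ ≤ H z) ∧ ⟪x, y⟫ = H x := by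
  have hsupp : ∀ x : E, x ≠ 0 → ∃ y : E, (∀ z, ⟪z, y⟫ ≤ H z) ∧ ⟪x, y⟫ = H x := fun x hx => by
    have hL := (hdiff.differentiableAt (isOpen_compl_singleton.mem_nhds hx)).hasFDerivAt
    have hEuler := hL.apply_self_eq_of_homogeneous hhom
    refine ⟨(InnerProductSpace.toDual ℝ E).symm (fderiv ℝ H x), fun z => ?_, ?_⟩ <;>
      rw [real_inner_comm, InnerProductSpace.toDual_symm_apply]
    · linarith [hconv.hasFDerivAt_le_sub hL z, map_sub (fderiv ℝ H x) z x]
    · exact hEuler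
  rcases eq_or_ne x 0 with rfl | hx
  · obtain ⟨x₀, hx₀⟩ := exists_ne (0 : E)
    obtain ⟨y, hy, -⟩ := hsupp x₀ hx₀
    exact ⟨y, hy, by simpa using (hhom 0 le_rfl 0).symm⟩
  · exact hsupp x hx

theorem eq_sSup_inner_of_convexOn [CompleteSpace E] [Nontrivial E] {H : E → ℝ}
    (hconv : ConvexOn ℝ univ H) (hhom : ∀ t : ℝ, 0 ≤ t → ∀ x, H (t • x) = t * H x)
    (hdiff : DifferentiableOn ℝ H {0}ᶜ) (x : E) :
    H x = sSup ((fun y => ⟪x, y⟫) '' {y | ∀ z, ⟪z, y⟫ ≤ H z}) := by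
  obtain ⟨y, hy, hxy⟩ := exists_forall_inner_le_and_inner_eq hconv hhom hdiff x
  have hgreatest : IsGreatest ((fun y => ⟪x, y⟫) '' {y | ∀ z, ⟪z, y⟫ ≤ H z}) (H x) := by
    refine ⟨⟨y, hy, hxy⟩, ?_⟩
    rintro _ ⟨z, hz, rfl⟩
    exact hz x
  exact hgreatest.csSup_eq.symm

theorem exists_eq_inner_of_map_smul_add_smul (hE : 1 < finrank ℝ E) {D : E → ℝ}
    (hD : ∀ a b : E, ‖a‖ = 1 → ‖b‖ = 1 → ⟪a, b⟫ = 0 →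
      ∀ p q : ℝ, D (p • a + q • b) = p * D a + q * D b) :
    ∃ a₀ : E, ∀ x, D x = ⟪a₀, x⟫ := by
  have : FiniteDimensional ℝ E := Module.finite_of_finrank_pos (by omega)
  have hsmul : ∀ (t : ℝ) (a : E), ‖a‖ = 1 → D (t • a) = t * D a := fun t a ha => by
    obtain ⟨b, hb, hab⟩ := exists_norm_eq_one_forall_inner_eq_zero ![a] (by simpa)
    simpa using hD a b ha hb (hab 0) t 0
  have hD0 : D 0 = 0 := by
    obtain ⟨a, ha, -⟩ := exists_norm_eq_one_forall_inner_eq_zero (![] : Fin 0 → E)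
      (by rw [Fintype.card_fin]; omega)
    simpa using hsmul 0 a ha
  have hadd : ∀ (t : ℝ) (a v : E), ‖a‖ = 1 → ⟪a, v⟫ = 0 → D (t • a + v) = t * D a + D v := by
    intro t a v ha hav
    rcases eq_or_ne v 0 with rfl | hv
    · simp [hsmul t a ha, hD0]
    have hu : ‖‖v‖⁻¹ • v‖ = 1 := norm_smul_inv_norm hv
    have hvu : v = ‖v‖ • ‖v‖⁻¹ • v := (smul_inv_smul₀ (norm_ne_zero_iff.2 hv) v).symm
    rw [hvu, hD a _ ha hu (by rw [real_inner_smul_right, hav, mul_zero]), hsmul _ _ hu]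
  let B := stdOrthonormalBasis ℝ E
  have hsum : ∀ (c : Fin (finrank ℝ E) → ℝ) (s : Finset (Fin (finrank ℝ E))),
      D (∑ i ∈ s, c i • B i) = ∑ i ∈ s, c i * D (B i) := by
    intro c s
    induction s using Finset.induction_on with
    | empty => simp [hD0]
    | insert j s hj ih =>
      rw [Finset.sum_insert hj, Finset.sum_insert hj, hadd _ _ _ (B.orthonormal.1 j), ih]
      simp [inner_sum, real_inner_smul_right, B.inner_eq_ite, hj]
  refine ⟨∑ i, D (B i) • B i, fun x => ?_⟩
  conv_lhs => rw [← B.sum_repr' x]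
  simp [hsum, sum_inner, real_inner_smul_left, mul_comm]

theorem map_greatCircle_eq_of_add_deriv_deriv_eq_zero {D : E → ℝ}
    (hd : ContDiff ℝ 2 (D ∘ greatCircle a b))
    (h : ∀ s, D (greatCircle a b s) + deriv (deriv (D ∘ greatCircle a b)) s = 0) (s : ℝ) :
    D (greatCircle a b s) = D a * cos s + D b * sin s := by
  have hcs := eq_cos_sin_of_add_deriv_deriv_eq_zero (hd.differentiable two_ne_zero)
    hd.differentiable_deriv_two h
  have hb : D b = deriv (D ∘ greatCircle a b) 0 := by simpa [greatCircle] using hcs (π / 2)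
  simpa [greatCircle, hb] using hcs s

theorem map_smul_add_smul_of_map_greatCircle {D : E → ℝ}
    (hhom : ∀ t : ℝ, 0 ≤ t → ∀ x, D (t • x) = t * D x)
    (hD : ∀ s, D (greatCircle a b s) = D a * cos s + D b * sin s) (p q : ℝ) :
    D (p • a + q • b) = p * D a + q * D b := by
  obtain ⟨r, θ, hr, rfl, rfl⟩ := exists_polar p q
  rw [← smul_greatCircle, hhom r hr, hD]
  ring

theorem exists_eq_add_inner_of_add_deriv_deriv_eq (hE : 1 < finrank ℝ E) {H H' : E → ℝ}
    (hhom : ∀ t : ℝ, 0 ≤ t → ∀ x, H (t • x) = t * H x)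
    (hhom' : ∀ t : ℝ, 0 ≤ t → ∀ x, H' (t • x) = t * H' x)
    (hsmooth : ContDiffOn ℝ 2 H {0}ᶜ) (hsmooth' : ContDiffOn ℝ 2 H' {0}ᶜ)
    (heq : ∀ a b : E, ‖a‖ = 1 → ‖b‖ = 1 → ⟪a, b⟫ = 0 → ∀ φ,
      H' (greatCircle a b φ) + deriv (deriv (H' ∘ greatCircle a b)) φ =
        H (greatCircle a b φ) + deriv (deriv (H ∘ greatCircle a b)) φ) :
    ∃ a₀ : E, ∀ x, H' x = H x + ⟪a₀, x⟫ := by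
  have hcircle : ∀ a b : E, ‖a‖ = 1 → ‖b‖ = 1 → ⟪a, b⟫ = 0 → ∀ s,
      (H' - H) (greatCircle a b s) = (H' - H) a * cos s + (H' - H) b * sin s := by
    intro a b ha hb hab
    have hg := hsmooth.comp_greatCircle ha hb hab
    have hg' := hsmooth'.comp_greatCircle ha hb hab
    have hd' : deriv ((H' - H) ∘ greatCircle a b) =
        deriv (H' ∘ greatCircle a b) - deriv (H ∘ greatCircle a b) :=
      funext fun s => deriv_sub (hg'.differentiable two_ne_zero s) (hg.differentiable two_ne_zero s)
    refine map_greatCircle_eq_of_add_deriv_deriv_eq_zero (hg'.sub hg) fun s => ?_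
    rw [hd', deriv_sub (hg'.differentiable_deriv_two s) (hg.differentiable_deriv_two s)]
    linarith [heq a b ha hb hab s, show (H' - H) (greatCircle a b s) =
      H' (greatCircle a b s) - H (greatCircle a b s) from rfl]
  obtain ⟨a₀, ha₀⟩ := exists_eq_inner_of_map_smul_add_smul hE fun a b ha hb hab =>
    map_smul_add_smul_of_map_greatCircle
      (fun t ht x => by simp only [Pi.sub_apply, hhom t ht, hhom' t ht, mul_sub])
      (hcircle a b ha hb hab)
  exact ⟨a₀, fun x => by linarith [ha₀ x, show (H' - H) x = H' x - H x from rfl]⟩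

end InnerProductSpace

theorem spherical_solution_gives_convex_body_general
    (F : EuclideanSpace ℝ (Fin 3) → EuclideanSpace ℝ (Fin 3) → ℝ)
    (hFnonneg : ∀ ω v : EuclideanSpace ℝ (Fin 3), ‖ω‖ = 1 → ‖v‖ = 1 → ⟪ω, v⟫ = 0 → 0 ≤ F ω v)
    (H : EuclideanSpace ℝ (Fin 3) → ℝ)
    (hhom : ∀ t : ℝ, 0 ≤ t → ∀ x : EuclideanSpace ℝ (Fin 3), H (t • x) = t * H x)
    (hsmooth : ContDiffOn ℝ 2 H {(0 : EuclideanSpace ℝ (Fin 3))}ᶜ)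
    (heq : ∀ ω a b : EuclideanSpace ℝ (Fin 3), ‖ω‖ = 1 → ‖a‖ = 1 → ‖b‖ = 1 →
      ⟪ω, a⟫ = 0 → ⟪ω, b⟫ = 0 → ⟪a, b⟫ = 0 →
      ∀ φ : ℝ,
        H (Real.cos φ • a + Real.sin φ • b) +
          deriv (deriv (fun s : ℝ => H (Real.cos s • a + Real.sin s • b))) φ =
        F ω (Real.cos φ • a + Real.sin φ • b)) :
    (ConvexOn ℝ Set.univ H ∧
      ∀ x : EuclideanSpace ℝ (Fin 3),
        H x = sSup ((fun y => ⟪x, y⟫) ''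
          {y : EuclideanSpace ℝ (Fin 3) | ∀ x' : EuclideanSpace ℝ (Fin 3), ⟪x', y⟫ ≤ H x'})) ∧
    (∀ H' : EuclideanSpace ℝ (Fin 3) → ℝ,
      (∀ t : ℝ, 0 ≤ t → ∀ x : EuclideanSpace ℝ (Fin 3), H' (t • x) = t * H' x) →
      ContDiffOn ℝ 2 H' {(0 : EuclideanSpace ℝ (Fin 3))}ᶜ →
      (∀ ω a b : EuclideanSpace ℝ (Fin 3), ‖ω‖ = 1 → ‖a‖ = 1 → ‖b‖ = 1 →
        ⟪ω, a⟫ = 0 → ⟪ω, b⟫ = 0 → ⟪a, b⟫ = 0 →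
        ∀ φ : ℝ,
          H' (Real.cos φ • a + Real.sin φ • b) +
            deriv (deriv (fun s : ℝ => H' (Real.cos s • a + Real.sin s • b))) φ =
          F ω (Real.cos φ • a + Real.sin φ • b)) →
      ∃ a₀ : EuclideanSpace ℝ (Fin 3),
        ∀ x : EuclideanSpace ℝ (Fin 3), H' x = H x + ⟪a₀, x⟫) := by
  have hE : 1 < finrank ℝ (EuclideanSpace ℝ (Fin 3)) := by simp
  have hpole : ∀ a b : EuclideanSpace ℝ (Fin 3), ∃ ω, ‖ω‖ = 1 ∧ ⟪ω, a⟫ = 0 ∧ ⟪ω, b⟫ = 0 := by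
    intro a b
    obtain ⟨ω, hω, h⟩ := exists_norm_eq_one_forall_inner_eq_zero ![a, b] (by simp)
    exact ⟨ω, hω, by simpa [real_inner_comm] using h 0, by simpa [real_inner_comm] using h 1⟩
  have hconv : ConvexOn ℝ univ H :=
    convexOn_univ_of_add_deriv_deriv_nonneg hE hhom hsmooth fun a b ha hb hab φ => by
      obtain ⟨ω, hω, hωa, hωb⟩ := hpole a b
      exact (hFnonneg ω _ hω (norm_greatCircle ha hb hab φ)
        (inner_greatCircle_eq_zero hωa hωb φ)).trans_eq (heq ω a b hω ha hb hωa hωb hab φ).symm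
  refine ⟨⟨hconv, eq_sSup_inner_of_convexOn hconv hhom (hsmooth.differentiableOn two_ne_zero)⟩,
    fun H' hhom' hsmooth' heq' => ?_⟩
  refine exists_eq_add_inner_of_add_deriv_deriv_eq hE hhom hhom' hsmooth hsmooth'
    fun a b ha hb hab φ => ?_
  obtain ⟨ω, hω, hωa, hωb⟩ := hpole a b
  exact (heq' ω a b hω ha hb hωa hωb hab φ).trans (heq ω a b hω ha hb hωa hωb hab φ).symm

theorem spherical_solution_gives_convex_body
    (F : EuclideanSpace ℝ (Fin 3) → EuclideanSpace ℝ (Fin 3) → ℝ)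
    (hFcont : ContinuousOn (fun p : EuclideanSpace ℝ (Fin 3) × EuclideanSpace ℝ (Fin 3) => F p.1 p.2)
      {p | ‖p.1‖ = 1 ∧ ‖p.2‖ = 1 ∧ ⟪p.1, p.2⟫ = 0})
    (hFnonneg : ∀ ω v : EuclideanSpace ℝ (Fin 3), ‖ω‖ = 1 → ‖v‖ = 1 → ⟪ω, v⟫ = 0 → 0 ≤ F ω v)
    (H : EuclideanSpace ℝ (Fin 3) → ℝ)
    (hhom : ∀ t : ℝ, 0 ≤ t → ∀ x : EuclideanSpace ℝ (Fin 3), H (t • x) = t * H x)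
    (hsmooth : ContDiffOn ℝ 2 H {(0 : EuclideanSpace ℝ (Fin 3))}ᶜ)
    (heq : ∀ ω a b : EuclideanSpace ℝ (Fin 3), ‖ω‖ = 1 → ‖a‖ = 1 → ‖b‖ = 1 →
      ⟪ω, a⟫ = 0 → ⟪ω, b⟫ = 0 → ⟪a, b⟫ = 0 →
      ∀ φ : ℝ,
        H (Real.cos φ • a + Real.sin φ • b) +
          deriv (deriv (fun s : ℝ => H (Real.cos s • a + Real.sin s • b))) φ =
        F ω (Real.cos φ • a + Real.sin φ • b)) :
    (ConvexOn ℝ Set.univ H ∧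
      ∀ x : EuclideanSpace ℝ (Fin 3),
        H x = sSup ((fun y => ⟪x, y⟫) ''
          {y : EuclideanSpace ℝ (Fin 3) | ∀ x' : EuclideanSpace ℝ (Fin 3), ⟪x', y⟫ ≤ H x'})) ∧
    (∀ H' : EuclideanSpace ℝ (Fin 3) → ℝ,
      (∀ t : ℝ, 0 ≤ t → ∀ x : EuclideanSpace ℝ (Fin 3), H' (t • x) = t * H' x) →
      ContDiffOn ℝ 2 H' {(0 : EuclideanSpace ℝ (Fin 3))}ᶜ →
      (∀ ω a b : EuclideanSpace ℝ (Fin 3), ‖ω‖ = 1 → ‖a‖ = 1 → ‖b‖ = 1 →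
        ⟪ω, a⟫ = 0 → ⟪ω, b⟫ = 0 → ⟪a, b⟫ = 0 →
        ∀ φ : ℝ,
          H' (Real.cos φ • a + Real.sin φ • b) +
            deriv (deriv (fun s : ℝ => H' (Real.cos s • a + Real.sin s • b))) φ =
          F ω (Real.cos φ • a + Real.sin φ • b)) →
      ∃ a₀ : EuclideanSpace ℝ (Fin 3),
        ∀ x : EuclideanSpace ℝ (Fin 3), H' x = H x + ⟪a₀, x⟫) :=
  spherical_solution_gives_convex_body_general F hFnonneg H hhom hsmooth heq
end

section
/- Let H : ℝ³ → ℝ be positively homogeneous of degree 1 and twice continuously differentiable on ℝ³ ∖ {0}. Fix a unit vector Ω and orthonormal vectors e₁, e₂ orthogonal to Ω, and set u(τ) = cos τ·e₁ + sin τ·e₂, E(τ) = −sin τ·e₁ + cos τ·e₂, p(ν,τ) = cos ν·u(τ) + sin ν·Ω, and G(ν,τ) = H(p(ν,τ)). Then for every τ ∈ ℝ and every ν with |ν| < π/2, f(0) + f''(0) = G(ν,τ) + (1/cos²ν)·(∂²G/∂τ²)(ν,τ) − tan ν·(∂G/∂ν)(ν,τ), where f(s) = H(cos s·p(ν,τ)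 + sin s·E(τ)). -/
/-! By the chain rule, `f(0) + f''(0) = H(p) + D²H(p)(E,E) - DH(p)(p)`, since the great circle
has acceleration `-p`. The `τ`-circle through `p` has radius `cos ν`, velocity `cos ν · E` and
acceleration `-cos ν · u`, so `∂²G/∂τ² = cos²ν · D²H(p)(E,E) - cos ν · DH(p)(u)`, while
`∂G/∂ν = DH(p)(-sin ν · u + cos ν · Ω)`. Since `p = cos ν · u + sin ν · Ω`, the right-hand side
collapses to the same expression. -/

open Real Filter Topology
open scoped RealInnerProductSpace

section

variable {F : Type*} [NormedAddCommGroup F]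

theorem norm_sq_smul_add_smul_of_inner_eq_zero [InnerProductSpace ℝ F] {v w : F}
    (h : ⟪v, w⟫ = 0) (a b : ℝ) :
    ‖a • v + b • w‖ ^ 2 = a ^ 2 * ‖v‖ ^ 2 + b ^ 2 * ‖w‖ ^ 2 := by
  rw [norm_add_sq_real, real_inner_smul_left, real_inner_smul_right, h, norm_smul, norm_smul,
    mul_pow, mul_pow, Real.norm_eq_abs, Real.norm_eq_abs, sq_abs, sq_abs]
  ring

theorem smul_add_smul_ne_zero_of_inner_eq_zero [InnerProductSpace ℝ F] {v w : F}
    (h : ⟪v, w⟫ = 0) (hv : v ≠ 0) {a : ℝ} (ha : a ≠ 0) (b : ℝ) : a • v + b • w ≠ 0 := by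
  have : 0 < ‖a • v + b • w‖ ^ 2 := by
    rw [norm_sq_smul_add_smul_of_inner_eq_zero h]
    have : 0 < ‖v‖ := norm_pos_iff.mpr hv
    positivity
  exact norm_ne_zero_iff.mp (sq_pos_iff.mp this)

variable [NormedSpace ℝ F] {G : Type*} [NormedAddCommGroup G] [NormedSpace ℝ G] {H : F → G}
  {U : Set F}

theorem hasDerivAt_of_eq_cos_smul_add_sin_smul {γ : ℝ → F} {v w : F}
    (hγ : ∀ t, γ t = cos t • v + sin t • w) (t : ℝ) :
    HasDerivAt γ (cos t • w + sin t • -v) t := by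
  rw [show γ = fun t => cos t • v + sin t • w from funext hγ]
  exact (((hasDerivAt_cos t).smul_const v).add ((hasDerivAt_sin t).smul_const w)).congr_deriv
    (by module)

theorem deriv_deriv_comp_of_contDiffOn (hU : IsOpen U) (hH : ContDiffOn ℝ 2 H U)
    {γ γ' : ℝ → F} {γ'' : F} {t₀ : ℝ}
    (hγ : ∀ t, HasDerivAt γ (γ' t) t) (hγ' : HasDerivAt γ' γ'' t₀) (ht₀ : γ t₀ ∈ U) :
    deriv (deriv fun t => H (γ t)) t₀ =
      fderiv ℝ (fderiv ℝ H) (γ t₀) (γ' t₀) (γ' t₀) + fderiv ℝ H (γ t₀) γ'' := by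
  have hnear : ∀ᶠ t in 𝓝 t₀, γ t ∈ U :=
    (hγ t₀).continuousAt.preimage_mem_nhds (hU.mem_nhds ht₀)
  have hderiv : deriv (fun t => H (γ t)) =ᶠ[𝓝 t₀] fun t => fderiv ℝ H (γ t) (γ' t) := by
    filter_upwards [hnear] with t ht
    exact (((hH.contDiffAt (hU.mem_nhds ht)).differentiableAt (by norm_num)).hasFDerivAt
      |>.comp_hasDerivAt t (hγ t)).deriv
  have hH₂ : HasFDerivAt (fderiv ℝ H) (fderiv ℝ (fderiv ℝ H) (γ t₀)) (γ t₀) :=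
    (((hH.contDiffAt (hU.mem_nhds ht₀)).fderiv_right (m := 1) (by norm_num)).differentiableAt
      one_ne_zero).hasFDerivAt
  rw [hderiv.deriv_eq]
  exact ((hH₂.comp_hasDerivAt t₀ (hγ t₀)).clm_apply hγ').deriv

theorem deriv_deriv_comp_cos_smul_add_sin_smul (hU : IsOpen U) (hH : ContDiffOn ℝ 2 H U)
    {x : F} (y : F) (hx : x ∈ U) :
    deriv (deriv fun s => H (cos s • x + sin s • y)) 0 =
      fderiv ℝ (fderiv ℝ H) x y y - fderiv ℝ H x x := by
  rw [deriv_deriv_comp_of_contDiffOn hU hH (hasDerivAt_of_eq_cos_smul_add_sin_smul fun _ => rfl)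
    (hasDerivAt_of_eq_cos_smul_add_sin_smul (fun _ => rfl) 0) (by simpa using hx)]
  simp [sub_eq_add_neg]

theorem deriv_deriv_comp_smul_add (hU : IsOpen U) (hH : ContDiffOn ℝ 2 H U) {u E : ℝ → F}
    (hu : ∀ t, HasDerivAt u (E t) t) {τ : ℝ} (hE : HasDerivAt E (-u τ) τ) (c : ℝ) (w : F)
    (hx : c • u τ + w ∈ U) :
    deriv (deriv fun t => H (c • u t + w)) τ =
      c ^ 2 • fderiv ℝ (fderiv ℝ H) (c • u τ + w) (E τ) (E τ) -
        c • fderiv ℝ H (c • u τ + w) (u τ) := by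
  rw [deriv_deriv_comp_of_contDiffOn (γ := fun t => c • u t + w) hU hH
    (fun t => ((hu t).const_smul c).add_const w) (hE.const_smul c) hx]
  simp [smul_neg, pow_two, mul_smul, sub_eq_add_neg]

end

theorem projection_curvature_radius_in_spherical_coordinates_general
    (H : EuclideanSpace ℝ (Fin 3) → ℝ)
    (hsmooth : ContDiffOn ℝ 2 H {(0 : EuclideanSpace ℝ (Fin 3))}ᶜ)
    (Ω e₁ e₂ : EuclideanSpace ℝ (Fin 3))
    (he₁ : ‖e₁‖ = 1) (he₂ : ‖e₂‖ = 1)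
    (h₁₂ : ⟪e₁, e₂⟫ = 0) (h₁Ω : ⟪e₁, Ω⟫ = 0) (h₂Ω : ⟪e₂, Ω⟫ = 0)
    (u E : ℝ → EuclideanSpace ℝ (Fin 3)) (p : ℝ → ℝ → EuclideanSpace ℝ (Fin 3))
    (G : ℝ → ℝ → ℝ)
    (hu : ∀ τ : ℝ, u τ = Real.cos τ • e₁ + Real.sin τ • e₂)
    (hE : ∀ τ : ℝ, E τ = (-Real.sin τ) • e₁ + Real.cos τ • e₂)
    (hp : ∀ ν τ : ℝ, p ν τ = Real.cos ν • u τ + Real.sin ν • Ω)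
    (hG : ∀ ν τ : ℝ, G ν τ = H (p ν τ)) :
    ∀ τ : ℝ, ∀ ν : ℝ, |ν| < Real.pi / 2 →
      (fun s : ℝ => H (Real.cos s • p ν τ + Real.sin s • E τ)) 0 +
        deriv (deriv (fun s : ℝ => H (Real.cos s • p ν τ + Real.sin s • E τ))) 0 =
      G ν τ + (1 / Real.cos ν ^ 2) * deriv (deriv (fun t : ℝ => G ν t)) τ -
        Real.tan ν * deriv (fun s : ℝ => G s τ) ν := by
  intro τ ν hν
  have hcos : 0 < cos ν := cos_pos_of_mem_Ioo (abs_lt.mp hν)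
  have hu' (t : ℝ) : HasDerivAt u (E t) t :=
    (hasDerivAt_of_eq_cos_smul_add_sin_smul hu t).congr_deriv (by rw [hE]; module)
  have hE' (t : ℝ) : HasDerivAt E (-u t) t :=
    (hasDerivAt_of_eq_cos_smul_add_sin_smul (v := e₂) (w := -e₁)
      (fun t => (hE t).trans (by module)) t).congr_deriv (by rw [hu]; module)
  have hu1 : ‖u τ‖ ^ 2 = 1 := by
    rw [hu, norm_sq_smul_add_smul_of_inner_eq_zero h₁₂, he₁, he₂]; simp
  have huΩ : ⟪u τ, Ω⟫ = 0 := by simp [hu, inner_add_left, real_inner_smul_left, h₁Ω, h₂Ω]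
  have hp0 : p ν τ ≠ 0 := hp ν τ ▸ smul_add_smul_ne_zero_of_inner_eq_zero huΩ
    (by rintro h; simp [h] at hu1) hcos.ne' _
  set L := fderiv ℝ H (p ν τ)
  set M := fderiv ℝ (fderiv ℝ H) (p ν τ)
  have hf : deriv (deriv fun s => H (cos s • p ν τ + sin s • E τ)) 0 =
      M (E τ) (E τ) - L (p ν τ) :=
    deriv_deriv_comp_cos_smul_add_sin_smul isOpen_compl_singleton hsmooth _ hp0
  have hGττ : deriv (deriv fun t => G ν t) τ =
      cos ν ^ 2 * M (E τ) (E τ) - cos ν * L (u τ) := by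
    simp_rw [hG, hp]
    rw [deriv_deriv_comp_smul_add isOpen_compl_singleton hsmooth hu' (hE' τ) _ _
      (hp ν τ ▸ hp0), ← hp]
    rfl
  have hGν : deriv (fun s => G s τ) ν = -sin ν * L (u τ) + cos ν * L Ω := by
    have hpτ : HasDerivAt (fun s => p s τ) (cos ν • Ω + sin ν • -u τ) ν :=
      hasDerivAt_of_eq_cos_smul_add_sin_smul (fun s => hp s τ) ν
    simp_rw [hG]
    refine (((hsmooth.contDiffAt (isOpen_compl_singleton.mem_nhds hp0)).differentiableAt
      (by norm_num)).hasFDerivAt.comp_hasDerivAt ν hpτ).deriv.trans ?_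
    simp [L]
    ring
  have hLp : L (p ν τ) = cos ν * L (u τ) + sin ν * L Ω := by
    conv_lhs => rw [hp]
    simp
  simp only [cos_zero, sin_zero, one_smul, zero_smul, add_zero]
  rw [hf, hGττ, hGν, hLp, hG, tan_eq_sin_div_cos]
  field_simp
  linear_combination -L (u τ) * sin_sq_add_cos_sq ν

theorem projection_curvature_radius_in_spherical_coordinates
    (H : EuclideanSpace ℝ (Fin 3) → ℝ)
    (hhom : ∀ t : ℝ, 0 ≤ t → ∀ x : EuclideanSpace ℝ (Fin 3), H (t • x) = t * H x)
    (hsmooth : ContDiffOn ℝ 2 H {(0 : EuclideanSpace ℝ (Fin 3))}ᶜ)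
    (Ω e₁ e₂ : EuclideanSpace ℝ (Fin 3))
    (hΩ : ‖Ω‖ = 1) (he₁ : ‖e₁‖ = 1) (he₂ : ‖e₂‖ = 1)
    (h₁₂ : ⟪e₁, e₂⟫ = 0) (h₁Ω : ⟪e₁, Ω⟫ = 0) (h₂Ω : ⟪e₂, Ω⟫ = 0)
    (u E : ℝ → EuclideanSpace ℝ (Fin 3)) (p : ℝ → ℝ → EuclideanSpace ℝ (Fin 3))
    (G : ℝ → ℝ → ℝ)
    (hu : ∀ τ : ℝ, u τ = Real.cos τ • e₁ + Real.sin τ • e₂)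
    (hE : ∀ τ : ℝ, E τ = (-Real.sin τ) • e₁ + Real.cos τ • e₂)
    (hp : ∀ ν τ : ℝ, p ν τ = Real.cos ν • u τ + Real.sin ν • Ω)
    (hG : ∀ ν τ : ℝ, G ν τ = H (p ν τ)) :
    ∀ τ : ℝ, ∀ ν : ℝ, |ν| < Real.pi / 2 →
      (fun s : ℝ => H (Real.cos s • p ν τ + Real.sin s • E τ)) 0 +
        deriv (deriv (fun s : ℝ => H (Real.cos s • p ν τ + Real.sin s • E τ))) 0 =
      G ν τ + (1 / Real.cos ν ^ 2) * deriv (deriv (fun t : ℝ => G ν t)) τ -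
        Real.tan ν * deriv (fun s : ℝ => G s τ) ν :=
  projection_curvature_radius_in_spherical_coordinates_general H hsmooth Ω e₁ e₂ he₁ he₂ h₁₂ h₁Ω h₂Ω
    u E p G hu hE hp hG
end
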